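/- arXiv:2409.07974 — 2 statements merged into one kernel-verified Lean document; each statement's English description precedes it below -/
import Mathlib

section
/- Let R be an integral domain, n ≥ 2, m coprime to n, and a, b ∈ R with a ≠ b. Then det C_m(a,b) = ±(ma + (n−m)b)(a−b)^{n−1}. In particular, if C_m(a,b) is invertible over R then ma + (n−m)b ≠ 0. -/
/-- The `n × n` Christoffel matrix `C_m(a,b)`. -/
def christoffel (n m : ℕ) {R : Type*} (a b : R) : Matrix (Fin n) (Fin n) R :=
  Matrix.of fun i j =>
    if (((i : ℕ) : ZMod n) - (m : ZMod n) * ((j : ℕ) : ZMod n)).val < m then a else b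

/-!
Up to a permutation of its columns (`j ↦ m j` on `ZMod n`), `C_m(a,b)` is the circulant
`b J + (a - b) G`, where `J` is the all-ones matrix, `G = 1 + P + ⋯ + P^(m-1)` and `P` is the
cyclic shift. Its rows all sum to `s = m a + (n - m) b`, so adding every column to the first and
then subtracting `b` times the first column from the others gives `det = s (a - b)^(n-1) d`, with
`d` an integer that does not depend on `a, b`.

To see `d = ±1`, take `t` with `m t = n q + 1`. Then `K = 1 + P^m + ⋯ + P^(m(t-1))` satisfies
`G K = 1 + P + ⋯ + P^(m t - 1) = 1 + q J`. The same column operations give `det G = m d` and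
`det K = t d'`, while `det (1 + q J) = 1 + q n = m t`; hence `d d' = 1`.
-/

open Matrix Finset

namespace Matrix

variable {ι R : Type*} [Fintype ι] [DecidableEq ι] [CommRing R]

theorem det_eq_mul_det_updateCol_one {G : Matrix ι ι R} {k : R} (hG : G *ᵥ 1 = k • 1)
    (i₀ : ι) : G.det = k * (G.updateCol i₀ 1).det := by
  have hsum : (fun i => ∑ j, (1 : ι → R) j • G i j) = k • 1 := by
    rw [← hG]
    ext i
    simp [mulVec, dotProduct]
  rw [← det_updateCol_smul, ← hsum, det_updateCol_sum, Pi.one_apply, one_smul]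

theorem det_const_add_sub_mul_of_mulVec_one {G : Matrix ι ι R} {k : R} (hG : G *ᵥ 1 = k • 1)
    (i₀ : ι) (a b : R) :
    (of fun i j => b + (a - b) * G i j).det =
      (k * (a - b) + Fintype.card ι * b) *
        ((a - b) ^ (Fintype.card ι - 1) * (G.updateCol i₀ 1).det) := by
  set v : ι → R := Function.update (fun _ => a - b) i₀ 1
  have hrow : (of fun i j => b + (a - b) * G i j) *ᵥ 1 =
      (k * (a - b) + Fintype.card ι * b) • 1 := by
    ext i
    have hGi := congrFun hG i
    simp only [mulVec, dotProduct, Pi.one_apply, mul_one, Pi.smul_apply, smul_eq_mul] at hGi ⊢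
    simp only [of_apply, sum_add_distrib, sum_const, card_univ, nsmul_eq_mul, ← mul_sum, hGi]
    ring
  have hcol : ((of fun i j => b + (a - b) * G i j).updateCol i₀ 1).det =
      (of fun i j => v j * G.updateCol i₀ 1 i j).det := by
    rw [← det_transpose, ← det_transpose (of _)]
    refine det_eq_of_forall_row_eq_smul_add_const (fun j => if j = i₀ then 0 else b) i₀
      (by simp) fun j i => ?_
    by_cases hj : j = i₀
    · subst hj
      simp [v]
    · simp [v, hj, add_comm]
  have hprod : ∏ j, v j = (a - b) ^ (Fintype.card ι - 1) := by
    rw [prod_update_of_mem (mem_univ _)]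
    simp [card_sdiff]
  rw [det_eq_mul_det_updateCol_one hrow i₀, hcol, det_mul_row, hprod]

theorem det_one_add_smul_ones (c : R) :
    (1 + c • of fun _ _ : ι => (1 : R)).det = 1 + c * Fintype.card ι := by
  convert det_one_add_replicateCol_mul_replicateRow (ι := Unit) (fun _ : ι => c) 1 using 3
  · ext i j
    simp [mul_apply]
  · simp [dotProduct, mul_comm]

end Matrix

section GeomSum

variable {A : Type*} [Semiring A]

theorem geom_sum_mul_geom_sum_pow (x : A) (m t : ℕ) :
    (∑ i ∈ range m, x ^ i) * ∑ k ∈ range t, (x ^ m) ^ k = ∑ j ∈ range (m * t), x ^ j := by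
  induction t with
  | zero => simp
  | succ t ih =>
    rw [sum_range_succ, mul_add, ih, Nat.mul_succ, sum_range_add, sum_mul]
    simp only [← pow_mul, ← pow_add, add_comm]

theorem geom_sum_mul_of_pow_eq_one {x : A} {n : ℕ} (hx : x ^ n = 1) (q : ℕ) :
    ∑ j ∈ range (q * n), x ^ j = q • ∑ j ∈ range n, x ^ j := by
  induction q with
  | zero => simp
  | succ q ih =>
    rw [Nat.succ_mul, sum_range_add, ih, succ_nsmul]
    simp [pow_add, pow_mul', hx]

end GeomSum

section Shift

variable {G R : Type*} [AddCommGroup G] [DecidableEq G] [Semiring R]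

def shiftMatrix (g : G) : Matrix G G R := of fun i j => if i = j + g then 1 else 0

@[simp]
theorem shiftMatrix_apply (g i j : G) :
    (shiftMatrix g : Matrix G G R) i j = if i = j + g then 1 else 0 := rfl

theorem shiftMatrix_zero : (shiftMatrix 0 : Matrix G G R) = 1 := by
  ext i j
  simp [one_apply]

variable [Fintype G]

theorem shiftMatrix_add (g h : G) :
    (shiftMatrix (g + h) : Matrix G G R) = shiftMatrix g * shiftMatrix h := by
  ext i j
  simp [mul_apply, ← add_assoc, add_right_comm _ h g]

theorem shiftMatrix_nsmul (k : ℕ) (g : G) :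
    (shiftMatrix (k • g) : Matrix G G R) = shiftMatrix g ^ k := by
  induction k with
  | zero => simp [shiftMatrix_zero]
  | succ k ih => rw [succ_nsmul, shiftMatrix_add, ih, pow_succ]

theorem shiftMatrix_mulVec_one (g : G) : (shiftMatrix g : Matrix G G R) *ᵥ 1 = 1 := by
  ext i
  simp [mulVec, dotProduct, eq_comm (a := i), ← eq_sub_iff_add_eq]

theorem shiftMatrix_pow_mulVec_one (g : G) (k : ℕ) :
    (shiftMatrix g : Matrix G G R) ^ k *ᵥ 1 = 1 := by
  rw [← shiftMatrix_nsmul, shiftMatrix_mulVec_one]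

theorem sum_shiftMatrix : ∑ g, (shiftMatrix g : Matrix G G R) = of fun _ _ => 1 := by
  ext i j
  simp [Matrix.sum_apply, eq_comm (a := i), add_comm j, ← eq_sub_iff_add_eq]

end Shift

def intervalCirculant (n m : ℕ) (R : Type*) [Zero R] [One R] : Matrix (ZMod n) (ZMod n) R :=
  circulant fun x => if x.val < m then 1 else 0

namespace ZMod

variable {n : ℕ} [NeZero n] {R : Type*}

theorem finEquiv_apply (i : Fin n) : finEquiv n i = ((i : ℕ) : ZMod n) := by
  obtain ⟨k, rfl⟩ := Nat.exists_eq_succ_of_ne_zero (NeZero.ne n)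
  exact (Fin.cast_val_eq_self i).symm

theorem sum_range_natCast {M : Type*} [AddCommMonoid M] (f : ZMod n → M) :
    ∑ i ∈ range n, f i = ∑ x, f x :=
  sum_nbij' (fun i => (i : ZMod n)) val (by simp) (fun x _ => by simpa using x.val_lt)
    (fun i hi => val_cast_of_lt (mem_range.mp hi)) (fun x _ => by simp) (fun _ _ => rfl)

variable [Semiring R]

theorem shiftMatrix_one_pow_self : (shiftMatrix (1 : ZMod n) : Matrix _ _ R) ^ n = 1 := by
  rw [← shiftMatrix_nsmul, nsmul_one, natCast_self, shiftMatrix_zero]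

theorem sum_range_shiftMatrix_one_pow :
    ∑ j ∈ range n, (shiftMatrix (1 : ZMod n) : Matrix _ _ R) ^ j = of fun _ _ => 1 := by
  simp only [← shiftMatrix_nsmul, nsmul_one]
  rw [sum_range_natCast (fun x => shiftMatrix x), sum_shiftMatrix]

theorem sum_range_shiftMatrix_one_pow_eq_intervalCirculant {m : ℕ} (hmn : m ≤ n) :
    ∑ i ∈ range m, (shiftMatrix (1 : ZMod n) : Matrix _ _ R) ^ i = intervalCirculant n m R := by
  ext x y
  have hcond : ∀ i ∈ range m, x = y + (i : ZMod n) ↔ (x - y).val = i := fun i hi => by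
    rw [← sub_eq_iff_eq_add']
    constructor
    · rintro h
      rw [h, val_cast_of_lt ((mem_range.mp hi).trans_le hmn)]
    · rintro rfl
      exact (natCast_zmod_val _).symm
  simp only [← shiftMatrix_nsmul, nsmul_one, Matrix.sum_apply, shiftMatrix_apply]
  rw [sum_congr rfl fun i hi => if_congr (hcond i hi) rfl rfl, sum_ite_eq]
  simp [intervalCirculant]

theorem intervalCirculant_mulVec_one {m : ℕ} (hmn : m ≤ n) :
    intervalCirculant n m R *ᵥ 1 = (m : R) • 1 := by
  rw [← sum_range_shiftMatrix_one_pow_eq_intervalCirculant hmn, sum_mulVec]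
  ext
  simp [shiftMatrix_pow_mulVec_one]

theorem isUnit_det_intervalCirculant_updateCol {m t q : ℕ} (hmn : m ≤ n)
    (hmt : m * t = n * q + 1) : IsUnit ((intervalCirculant n m ℤ).updateCol 0 1).det := by
  set P : Matrix (ZMod n) (ZMod n) ℤ := shiftMatrix 1
  set K := ∑ k ∈ range t, (P ^ m) ^ k
  have hK : K *ᵥ 1 = (t : ℤ) • 1 := by
    simp [K, sum_mulVec, ← pow_mul, P, shiftMatrix_pow_mulVec_one]
  have hGK : intervalCirculant n m ℤ * K = 1 + (q : ℤ) • of fun _ _ => 1 := by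
    rw [← sum_range_shiftMatrix_one_pow_eq_intervalCirculant hmn, geom_sum_mul_geom_sum_pow, hmt,
      sum_range_succ, mul_comm n, geom_sum_mul_of_pow_eq_one shiftMatrix_one_pow_self,
      sum_range_shiftMatrix_one_pow, pow_mul', shiftMatrix_one_pow_self, one_pow, add_comm,
      Nat.cast_smul_eq_nsmul]
  have hdet : (m * t : ℤ) * (((intervalCirculant n m ℤ).updateCol 0 1).det *
      (K.updateCol 0 1).det) = m * t := by
    have h := congrArg det hGK
    rw [det_mul, det_eq_mul_det_updateCol_one (intervalCirculant_mulVec_one hmn) 0,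
      det_eq_mul_det_updateCol_one hK 0, det_one_add_smul_ones, ZMod.card] at h
    rw [← mul_mul_mul_comm, h]
    exact_mod_cast (hmt.trans (by ring)).symm
  have hmt0 : (m * t : ℤ) ≠ 0 := by exact_mod_cast (by omega : m * t ≠ 0)
  exact IsUnit.of_mul_eq_one _ ((mul_eq_left₀ hmt0).mp hdet)

end ZMod

theorem christoffel_eq_submatrix_circulant {R : Type*} {n m : ℕ} [NeZero n] (u : (ZMod n)ˣ)
    (hu : (u : ZMod n) = m) (a b : R) :
    christoffel n m a b =
      ((circulant fun x : ZMod n => if x.val < m then a else b).submatrix id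
        (Units.mulLeft u)).submatrix (ZMod.finEquiv n).toEquiv (ZMod.finEquiv n).toEquiv := by
  ext i j
  simp [christoffel, circulant_apply, ZMod.finEquiv_apply, hu]

theorem det_christoffel {R : Type*} [CommRing R] {n m t q : ℕ} [NeZero n] (hmn : m ≤ n)
    (hmt : m * t = n * q + 1) (a b : R) :
    ∃ ε : ℤ, IsUnit ε ∧ (christoffel n m a b).det =
      ε * (((m : R) * a + ((n : R) - (m : R)) * b) * (a - b) ^ (n - 1)) := by
  have hm : (m : ZMod n) * t = 1 := by
    simpa using congrArg (Nat.cast : ℕ → ZMod n) hmt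
  let u : (ZMod n)ˣ := ⟨m, t, hm, by rw [mul_comm, hm]⟩
  have hcirc : (circulant fun x : ZMod n => if x.val < m then a else b) =
      of fun x y => b + (a - b) * intervalCirculant n m R x y := by
    ext x y
    by_cases h : (x - y).val < m <;> simp [intervalCirculant, h]
  have hcast : ((intervalCirculant n m R).updateCol 0 1).det =
      ((((intervalCirculant n m ℤ).updateCol 0 1).det : ℤ) : R) := by
    rw [← eq_intCast (Int.castRingHom R), RingHom.map_det, RingHom.mapMatrix_apply,
      map_updateCol, intervalCirculant, intervalCirculant, map_circulant]
    simp [Function.comp_def, apply_ite, Pi.one_def]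
  refine ⟨Equiv.Perm.sign (Units.mulLeft u) * _,
    (Units.isUnit _).mul (ZMod.isUnit_det_intervalCirculant_updateCol hmn hmt), ?_⟩
  rw [christoffel_eq_submatrix_circulant u rfl, det_submatrix_equiv_self, det_permute', hcirc,
    det_const_add_sub_mul_of_mulVec_one (ZMod.intervalCirculant_mulVec_one hmn) 0, hcast,
    ZMod.card]
  push_cast
  ring

theorem christoffel_det_general (R : Type*) [CommRing R] [IsDomain R]
    (n m : ℕ) (hn : 2 ≤ n) (hm' : m < n) (hc : Nat.Coprime m n)
    (a b : R) :
    ((christoffel n m a b).det = ((m : R) * a + ((n : R) - (m : R)) * b) * (a - b) ^ (n - 1) ∨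
      (christoffel n m a b).det = -(((m : R) * a + ((n : R) - (m : R)) * b) * (a - b) ^ (n - 1))) ∧
    (IsUnit (christoffel n m a b).det → (m : R) * a + ((n : R) - (m : R)) * b ≠ 0) := by
  obtain ⟨t, -, ht⟩ := Nat.exists_mul_mod_eq_one_of_coprime hc (by omega)
  have : NeZero n := ⟨by omega⟩
  have hmt : m * t = n * (m * t / n) + 1 := by rw [← ht, Nat.div_add_mod]
  obtain ⟨ε, hε, hdet⟩ := det_christoffel hm'.le hmt a b
  refine ⟨?_, fun hunit hs => ?_⟩
  · rcases Int.isUnit_iff.mp hε with rfl | rfl <;> simp [hdet]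
  · rw [hdet, hs] at hunit
    simp at hunit

theorem christoffel_det (R : Type*) [CommRing R] [IsDomain R]
    (n m : ℕ) (hn : 2 ≤ n) (hm : 1 ≤ m) (hm' : m < n) (hc : Nat.Coprime m n)
    (a b : R) (hab : a ≠ b) :
    ((christoffel n m a b).det = ((m : R) * a + ((n : R) - (m : R)) * b) * (a - b) ^ (n - 1) ∨
      (christoffel n m a b).det = -(((m : R) * a + ((n : R) - (m : R)) * b) * (a - b) ^ (n - 1))) ∧
    (IsUnit (christoffel n m a b).det → (m : R) * a + ((n : R) - (m : R)) * b ≠ 0) :=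
  christoffel_det_general R n m hn hm' hc a b
end

section
/- Let R be an integral domain, n ≥ 2, and let GC_n(R) denote the set of all invertible n×n Christoffel matrices over R. Then GC_n(R) is an abelian subgroup of GL_n(R): it is closed under products, closed under inverses, contains the identity matrix, and any two of its elements commute. -/
/-- A matrix is a Christoffel matrix if it equals `C_m(a,b)` for some `m` coprime to `n`
and distinct `a, b`. -/
def IsChristoffel {R : Type*} (n : ℕ) (M : Matrix (Fin n) (Fin n) R) : Prop :=
  ∃ (m : ℕ) (a b : R), 1 ≤ m ∧ m < n ∧ Nat.Coprime m n ∧ a ≠ b ∧ M = christoffel n m a b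

/-!
Write `P_m` for the 0/1 matrix `christoffel n m 1 0` and `J = P_n` for the all-ones matrix, so
that `C_m(a,b) = b J + (a - b) P_m`. Column `j` of `P_m` is the indicator of the cyclic interval
`[m j, m j + m)`, so column `j` of `P_m P_{m'}` counts how often each residue occurs in
`[m m' j, m m' j + m m')`; this gives `P_m P_{m'} = ⌊m m' / n⌋ J + P_{m m' mod n}`. Hence the
product of two Christoffel matrices is again one, given by a formula symmetric in the two factors.
If `det C_m(a,b)` is a unit, then so are `a - b` (all rows agree modulo `a - b`) and the row sum
`n b + m (a - b)`, and these two inverses let one solve `C_m(a,b) C_{m'}(a',b') = C_1(1,0) = 1`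
for `m m' ≡ 1 (mod n)`.
-/

open Finset Matrix

lemma ZMod.natCast_finVal_inj {n : ℕ} {i j : Fin n} :
    ((i : ℕ) : ZMod n) = (j : ℕ) ↔ i = j := by
  rw [ZMod.natCast_eq_natCast_iff', Nat.mod_eq_of_lt i.isLt, Nat.mod_eq_of_lt j.isLt, Fin.val_inj]

lemma ZMod.sum_natCast_fin {M : Type*} [AddCommMonoid M] (n : ℕ) [NeZero n] (f : ZMod n → M) :
    ∑ k : Fin n, f (k : ℕ) = ∑ x : ZMod n, f x :=
  Fintype.sum_bijective _ ⟨fun _ _ h => ZMod.natCast_finVal_inj.1 h,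
    fun x => ⟨⟨x.val, x.val_lt⟩, ZMod.natCast_zmod_val x⟩⟩ _ _ fun _ => rfl

lemma ZMod.card_filter_range_natCast_eq (n N : ℕ) [NeZero n] (x : ZMod n) :
    #{s ∈ range N | ((s : ℕ) : ZMod n) = x} = N / n + if x.val < N % n then 1 else 0 := by
  rw [← Nat.count_eq_card_filter_range, ← Nat.mod_eq_of_lt x.val_lt,
    ← Nat.count_modEq_card _ (NeZero.pos n)]
  congr! 2 with s
  rw [← ZMod.natCast_eq_natCast_iff, ZMod.natCast_zmod_val]

lemma ZMod.card_filter_val_lt_and_val_sub_mul_lt {n m m' : ℕ} [NeZero n] (hm : m ≤ n)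
    (hm' : m' ≤ n) (x : ZMod n) :
    #{u : ZMod n | u.val < m' ∧ (x - m * u).val < m} =
      #{s ∈ range (m * m') | ((s : ℕ) : ZMod n) = x} := by
  have hdivmod (s : ℕ) :
      (s : ZMod n) - m * ((s / m : ℕ) : ZMod n) = ((s % m : ℕ) : ZMod n) := by
    rw [sub_eq_iff_eq_add', ← Nat.cast_mul, ← Nat.cast_add, Nat.div_add_mod]
  -- `u` and `(x - m * u).val` are the quotient and the remainder of `s` by `m`
  refine card_nbij' (fun u => m * u.val + (x - m * u).val) (fun s => ((s / m : ℕ) : ZMod n))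
    ?_ ?_ ?_ ?_
  · intro u hu
    simp only [coe_filter, mem_univ, true_and, Set.mem_ofPred_eq, mem_range] at hu ⊢
    refine ⟨by nlinarith, ?_⟩
    push_cast
    rw [ZMod.natCast_zmod_val, ZMod.natCast_zmod_val]
    ring
  · intro s hs
    simp only [coe_filter, Set.mem_ofPred_eq, mem_range] at hs
    obtain ⟨hs, rfl⟩ := hs
    have hq : s / m < m' := Nat.div_lt_of_lt_mul hs
    have hr : s % m < m := Nat.mod_lt _ (by nlinarith)
    simp only [coe_filter, mem_univ, true_and, Set.mem_ofPred_eq]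
    rw [hdivmod, ZMod.val_cast_of_lt (by omega), ZMod.val_cast_of_lt (by omega)]
    exact ⟨hq, hr⟩
  · intro u hu
    simp only [coe_filter, mem_univ, true_and, Set.mem_ofPred_eq] at hu
    dsimp only
    rw [Nat.mul_add_div (by omega), Nat.div_eq_of_lt hu.2, add_zero, ZMod.natCast_zmod_val]
  · intro s hs
    simp only [coe_filter, Set.mem_ofPred_eq, mem_range] at hs
    obtain ⟨hs, rfl⟩ := hs
    have hq : s / m < m' := Nat.div_lt_of_lt_mul hs
    have hr : s % m < m := Nat.mod_lt _ (by nlinarith)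
    dsimp only
    rw [hdivmod, ZMod.val_cast_of_lt (by omega), ZMod.val_cast_of_lt (by omega),
      Nat.div_add_mod]

lemma Ideal.eq_top_of_isUnit_det_of_sub_mem {R ι : Type*} [CommRing R] [Fintype ι]
    [DecidableEq ι] {A : Matrix ι ι R} (hA : IsUnit A.det) {I : Ideal R} {i j : ι}
    (hij : i ≠ j) (h : ∀ k, A i k - A j k ∈ I) : I = ⊤ := by
  by_contra hI
  have : Nontrivial (R ⧸ I) := Ideal.Quotient.nontrivial_iff.2 hI
  have hdet := hA.map (Ideal.Quotient.mk I)
  rw [RingHom.map_det,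
    det_zero_of_row_eq hij (funext fun k => Ideal.Quotient.eq.2 (h k))] at hdet
  exact not_isUnit_zero hdet

lemma Matrix.isUnit_of_mul_eq_smul {R ι κ : Type*} [CommRing R] [Fintype ι] [DecidableEq ι]
    {A : Matrix ι ι R} {B : Matrix ι κ R} {c : R} (hA : IsUnit A.det) (h : A * B = c • B)
    {i : ι} {j : κ} (hB : IsUnit (B i j)) : IsUnit c :=
  isUnit_of_dvd_unit ⟨(A⁻¹ * B) i j, by
    rw [← smul_eq_mul, ← Matrix.smul_apply, ← Matrix.mul_smul, ← h,
      nonsing_inv_mul_cancel_left _ _ hA]⟩ hB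

lemma isChristoffel_christoffel {R : Type*} {n r : ℕ} (hn : n ≠ 1) (hr : r < n)
    (hrn : r.Coprime n) {a b : R} (hab : a ≠ b) : IsChristoffel n (christoffel n r a b) := by
  refine ⟨r, a, b, Nat.pos_of_ne_zero ?_, hr, hrn, hab, rfl⟩
  rintro rfl
  exact hn (Nat.coprime_zero_left n |>.1 hrn)

section

variable {R : Type*} {n : ℕ}

lemma christoffel_zero_left_zero [Zero R] (a : R) : christoffel n 0 a 0 = 0 := by
  ext i j
  simp [christoffel]

lemma christoffel_one_one_zero [Zero R] [One R] : christoffel n 1 (1 : R) 0 = 1 := by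
  ext i j
  simp only [christoffel, of_apply, Nat.cast_one, one_mul, Nat.lt_one_iff, ZMod.val_eq_zero,
    sub_eq_zero, one_apply, ZMod.natCast_finVal_inj]

variable [NeZero n]

lemma christoffel_eq_smul_add_smul [Ring R] (m : ℕ) (a b : R) :
    christoffel n m a b = b • christoffel n n 1 0 + (a - b) • christoffel n m 1 0 := by
  ext i j
  simp only [christoffel, of_apply, Matrix.add_apply, Matrix.smul_apply, ZMod.val_lt, if_true,
    smul_eq_mul]
  split_ifs <;> simp

lemma christoffel_one_zero_mul [Semiring R] {m m' : ℕ} (hm : m ≤ n) (hm' : m' ≤ n) :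
    christoffel n m (1 : R) 0 * christoffel n m' 1 0 =
      ((m * m' / n : ℕ) : R) • christoffel n n 1 0 + christoffel n (m * m' % n) 1 0 := by
  ext i j
  simp only [mul_apply, christoffel, of_apply, ite_zero_mul_ite_zero, mul_one, Matrix.add_apply,
    Matrix.smul_apply, ZMod.val_lt, if_true, smul_eq_mul]
  rw [ZMod.sum_natCast_fin n fun k =>
      if (_ - _ * k).val < m ∧ (k - _).val < m' then (1 : R) else 0,
    ← Equiv.sum_comp (Equiv.addLeft ((m' : ZMod n) * (j : ℕ)))]
  simp only [Equiv.coe_addLeft, add_sub_cancel_left, mul_add, ← sub_sub, and_comm]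
  rw [Finset.sum_boole, ZMod.card_filter_val_lt_and_val_sub_mul_lt hm hm',
    ZMod.card_filter_range_natCast_eq, ZMod.natCast_mod]
  push_cast
  simp [mul_assoc]

lemma christoffel_one_zero_mul_self [Semiring R] {m : ℕ} (hm : m ≤ n) :
    christoffel n m (1 : R) 0 * christoffel n n 1 0 = (m : R) • christoffel n n 1 0 := by
  rw [christoffel_one_zero_mul hm le_rfl, Nat.mul_div_cancel _ (NeZero.pos n), Nat.mul_mod_left,
    christoffel_zero_left_zero, add_zero]

lemma christoffel_self_mul_one_zero [Semiring R] {m : ℕ} (hm : m ≤ n) :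
    christoffel n n (1 : R) 0 * christoffel n m 1 0 = (m : R) • christoffel n n 1 0 := by
  rw [christoffel_one_zero_mul le_rfl hm, Nat.mul_div_cancel_left _ (NeZero.pos n),
    Nat.mul_mod_right, christoffel_zero_left_zero, add_zero]

end

section

variable {R : Type*} [CommRing R] {n : ℕ}

lemma isUnit_sub_of_isUnit_det_christoffel (hn : 2 ≤ n) {m : ℕ} {a b : R}
    (hA : IsUnit (christoffel n m a b).det) : IsUnit (a - b) := by
  rw [← Ideal.span_singleton_eq_top]
  refine Ideal.eq_top_of_isUnit_det_of_sub_mem hA (i := ⟨0, by omega⟩) (j := ⟨1, by omega⟩)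
    (Fin.ne_of_val_ne zero_ne_one) fun k => Ideal.mem_span_singleton.2 ?_
  simp only [christoffel, of_apply]
  split_ifs <;> simp [dvd_sub_comm]

variable [NeZero n]

lemma christoffel_mul_christoffel {m m' : ℕ} (hm : m ≤ n) (hm' : m' ≤ n) (a b a' b' : R) :
    christoffel n m a b * christoffel n m' a' b' =
      christoffel n (m * m' % n)
        (n * b * b' + m' * b * (a' - b') + m * (a - b) * b'
          + (m * m' / n : ℕ) * (a - b) * (a' - b') + (a - b) * (a' - b'))
        (n * b * b' + m' * b * (a' - b') + m * (a - b) * b'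
          + (m * m' / n : ℕ) * (a - b) * (a' - b')) := by
  rw [christoffel_eq_smul_add_smul m a b, christoffel_eq_smul_add_smul m' a' b',
    christoffel_eq_smul_add_smul (m * m' % n)]
  simp only [add_mul, mul_add, Matrix.smul_mul, Matrix.mul_smul, christoffel_one_zero_mul hm hm',
    christoffel_one_zero_mul_self hm, christoffel_self_mul_one_zero hm',
    christoffel_one_zero_mul_self le_rfl]
  module

lemma christoffel_mul_christoffel_self {m : ℕ} (hm : m ≤ n) (a b : R) :
    christoffel n m a b * christoffel n n 1 0 =
      (n * b + m * (a - b)) • christoffel n n (1 : R) 0 := by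
  rw [christoffel_eq_smul_add_smul m a b, add_mul, Matrix.smul_mul, Matrix.smul_mul,
    christoffel_one_zero_mul_self le_rfl, christoffel_one_zero_mul_self hm]
  module

lemma isUnit_rowSum_of_isUnit_det_christoffel {m : ℕ} (hm : m ≤ n) {a b : R}
    (hA : IsUnit (christoffel n m a b).det) : IsUnit (n * b + m * (a - b)) :=
  Matrix.isUnit_of_mul_eq_smul hA (christoffel_mul_christoffel_self hm a b)
    (i := ⟨0, NeZero.pos n⟩) (j := ⟨0, NeZero.pos n⟩) (by simp [christoffel, NeZero.pos n])

lemma christoffel_mul_christoffel_eq_one {m m' : ℕ} (hm : m ≤ n) (hm' : m' ≤ n)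
    (hmm' : m * m' % n = 1) {a b α σ : R} (hα : (a - b) * α = 1)
    (hσ : (n * b + m * (a - b)) * σ = 1) :
    christoffel n m a b *
      christoffel n m' (α - σ * (m' * b * α + (m * m' / n : ℕ)))
        (-(σ * (m' * b * α + (m * m' / n : ℕ)))) = 1 := by
  rw [christoffel_mul_christoffel hm hm', hmm', ← christoffel_one_one_zero]
  set q : R := ((m * m' / n : ℕ) : R)
  congr 1
  · linear_combination (-(m' * b * α + q)) * hσ + (q + 1) * hα
  · linear_combination (-(m' * b * α + q)) * hσ + q * hα

end

theorem christoffel_group (R : Type*) [CommRing R] [IsDomain R] (n : ℕ) (hn : 2 ≤ n) :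
    let S : Set (Matrix (Fin n) (Fin n) R) := {A | IsChristoffel n A ∧ IsUnit A.det}
    (1 : Matrix (Fin n) (Fin n) R) ∈ S ∧
    (∀ A ∈ S, ∀ B ∈ S, A * B ∈ S) ∧
    (∀ A ∈ S, A⁻¹ ∈ S) ∧
    (∀ A ∈ S, ∀ B ∈ S, A * B = B * A) := by
  intro S
  have : NeZero n := ⟨by omega⟩
  refine ⟨⟨⟨1, 1, 0, le_rfl, hn, Nat.coprime_one_left n, one_ne_zero,
    christoffel_one_one_zero.symm⟩, by simp⟩, ?_, ?_, ?_⟩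
  · rintro _ ⟨⟨m, a, b, -, hm, hmn, hab, rfl⟩, hA⟩
      _ ⟨⟨m', a', b', -, hm', hm'n, hab', rfl⟩, hB⟩
    refine ⟨?_, by rw [det_mul]; exact hA.mul hB⟩
    rw [christoffel_mul_christoffel hm.le hm'.le]
    refine isChristoffel_christoffel (by omega) (Nat.mod_lt _ (NeZero.pos n))
      ((ZMod.coprime_mod_iff_coprime _ _).2 (Nat.Coprime.mul_left hmn hm'n)) ?_
    simpa using mul_ne_zero (sub_ne_zero.2 hab) (sub_ne_zero.2 hab')
  · rintro _ ⟨⟨m, a, b, -, hm, hmn, -, rfl⟩, hA⟩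
    obtain ⟨m', hm', hmm'⟩ := Nat.exists_mul_mod_eq_one_of_coprime hmn (by omega)
    obtain ⟨α, hα⟩ := (isUnit_sub_of_isUnit_det_christoffel hn hA).exists_right_inv
    obtain ⟨σ, hσ⟩ := (isUnit_rowSum_of_isUnit_det_christoffel hm.le hA).exists_right_inv
    refine ⟨?_, isUnit_nonsing_inv_det _ hA⟩
    rw [inv_eq_right_inv (christoffel_mul_christoffel_eq_one hm.le hm'.le hmm' hα hσ)]
    refine isChristoffel_christoffel (by omega) hm' (Nat.coprime_of_mul_modEq_one m ?_) ?_
    · rw [Nat.ModEq, mul_comm, hmm', Nat.mod_eq_of_lt (by omega)]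
    · intro h
      have hα0 : α = 0 := by linear_combination h
      simp [hα0] at hα
  · rintro _ ⟨⟨m, a, b, -, hm, -, -, rfl⟩, -⟩
      _ ⟨⟨m', a', b', -, hm', -, -, rfl⟩, -⟩
    rw [christoffel_mul_christoffel hm.le hm'.le, christoffel_mul_christoffel hm'.le hm.le,
      Nat.mul_comm m']
    congr 1 <;> ring
end
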